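/- If C₁ and C₂ are Baker classes of ordered graphs, then C₁ ⊕ C₂ is a Baker class. -/

import Mathlib

/-!
Destroyer shadows a winning strategy for the base `G[B]`, played with the sequence
`i ↦ r (2i+1)`, spending two rounds per base round.

In the first round of each pair he detaches the components of `G − B` that have no neighbour
left in the current base: each goes to its own layer, consecutive ones `r₀ + 1` apart, and
everything else to layer `0`. A window of `r₀` layers then sees a single such component, where he
switches to a winning strategy for `C₂`, or only the rest. In the second round he copies the base
move. The least base vertex is the least vertex overall, since attachments precede their
components. A base layering extends to the whole graph by giving a component the least layer of its
attachment set: that set is a clique, so all its layers are within one of each other.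

The `C₂` strategies use `sᵢ = max_{m ≤ t₁} r (2m+1+i)`, which dominates the remaining sequence
whenever they start.
-/

/-- A layering of a simple graph: adjacent vertices differ by at most 1. -/
def IsLayering {V : Type*} (G : SimpleGraph V) (lam : V → ℤ) : Prop :=
  ∀ ⦃u v : V⦄, G.Adj u v → |lam u - lam v| ≤ 1

/-- The spanning subgraph of `G` keeping only the edges with both ends in `U`.
Reachability and distances between vertices of `U` in this graph coincide with those
in the induced subgraph `G[U]`. -/
def restrictSet {V : Type*} (G : SimpleGraph V) (U : Set V) : SimpleGraph V where
  Adj u v := G.Adj u v ∧ u ∈ U ∧ v ∈ U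
  symm := ⟨fun _ _ ⟨h, hu, hv⟩ => ⟨h.symm, hv, hu⟩⟩
  loopless := ⟨fun u ⟨h, _, _⟩ => G.loopless.irrefl u h⟩

/-- `BakerWins G t S r` : Destroyer wins the Baker game in at most `t` rounds on the state
whose ordered graph is the subgraph of `G` induced on `S` (with the inherited vertex order)
and whose sequence is `r` (0-indexed: `r 0` is the first term `r₁`).
If the vertex set is empty, Destroyer has won; otherwise he needs `t ≥ 1` and either
(Delete) he wins on the graph minus its smallest vertex with the tail of the sequence, or
(Restrict) there is a layering `lam` of the current graph such that for every interval of
at most `r 0` consecutive integers, he wins on the induced subgraph on the corresponding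
layers with the tail of the sequence. -/
def BakerWins {V : Type*} [LinearOrder V] (G : SimpleGraph V) :
    ℕ → Set V → (ℕ → ℕ) → Prop
  | 0, S, _ => S = ∅
  | t + 1, S, r => S = ∅ ∨
      ((∃ v ∈ S, (∀ u ∈ S, v ≤ u) ∧ BakerWins G t (S \ {v}) (fun i => r (i + 1))) ∨
       (∃ lam : V → ℤ,
          (∀ u ∈ S, ∀ w ∈ S, G.Adj u w → |lam u - lam w| ≤ 1) ∧
          ∀ a b : ℤ, b + 1 ≤ a + (r 0 : ℤ) →
            BakerWins G t {v | v ∈ S ∧ lam v ∈ Set.Icc a b} (fun i => r (i + 1))))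

/-- An ordered graph: a finite simple graph with a linear order on its vertices. -/
structure OrderedGraph : Type 1 where
  V : Type
  [fin : Fintype V]
  [ord : LinearOrder V]
  graph : SimpleGraph V

attribute [instance] OrderedGraph.fin OrderedGraph.ord

/-- A class of ordered graphs is a Baker class if for every infinite sequence of positive
integers `r` there is `t` such that Destroyer wins the Baker game on `(G, r)` in `t` rounds
for every `G` in the class. -/
def IsBakerClass (C : Set OrderedGraph) : Prop :=
  ∀ r : ℕ → ℕ, (∀ i, 0 < r i) → ∃ t : ℕ, ∀ O ∈ C, BakerWins O.graph t Set.univ r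

/-- The induced ordered subgraph on a set of vertices, with the inherited order. -/
noncomputable def OrderedGraph.induce (O : OrderedGraph) (S : Set O.V) : OrderedGraph where
  V := ↥S
  fin := S.toFinite.fintype
  graph := O.graph.induce S

/-- `C` is the vertex set of a connected component of `G − B`. -/
def IsComponentOf {V : Type*} (G : SimpleGraph V) (B C : Set V) : Prop :=
  ∃ x, x ∉ B ∧ C = {y | (restrictSet G Bᶜ).Reachable x y}

/-- The clique-sum class `C₁ ⊕ C₂`: ordered graphs `G` with a base `B ⊆ V(G)` such that
`G[B] ∈ C₁` and for every connected component `C` of `G − B`: `G[C] ∈ C₂`, the set of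
vertices of `B` with a neighbor in `C` induces a clique, and all its vertices are smaller
than all vertices of `C`. -/
def CliqueSum (C₁ C₂ : Set OrderedGraph) : Set OrderedGraph :=
  {O | ∃ B : Set O.V, O.induce B ∈ C₁ ∧
    ∀ C : Set O.V, IsComponentOf O.graph B C →
      O.induce C ∈ C₂ ∧
      (∀ x ∈ B, (∃ c ∈ C, O.graph.Adj x c) →
        ∀ y ∈ B, (∃ c ∈ C, O.graph.Adj y c) → x ≠ y → O.graph.Adj x y) ∧
      (∀ x ∈ B, (∃ c ∈ C, O.graph.Adj x c) → ∀ c ∈ C, x < c)}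

open Set

section BakerWins

variable {V : Type*} [LinearOrder V] {G : SimpleGraph V} {t : ℕ} {S : Set V} {r : ℕ → ℕ}

lemma bakerWins_empty (t : ℕ) (r : ℕ → ℕ) : BakerWins G t ∅ r := by
  cases t <;> first | rfl | exact Or.inl rfl

namespace BakerWins

lemma succ_delete {v : V} (hv : v ∈ S) (hmin : ∀ u ∈ S, v ≤ u)
    (h : BakerWins G t (S \ {v}) (fun i => r (i + 1))) : BakerWins G (t + 1) S r :=
  Or.inr (Or.inl ⟨v, hv, hmin, h⟩)

lemma succ_restrict (lam : V → ℤ) (hlam : ∀ u ∈ S, ∀ w ∈ S, G.Adj u w → |lam u - lam w| ≤ 1)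
    (h : ∀ a b : ℤ, b + 1 ≤ a + (r 0 : ℤ) →
      BakerWins G t {v | v ∈ S ∧ lam v ∈ Icc a b} (fun i => r (i + 1))) :
    BakerWins G (t + 1) S r :=
  Or.inr (Or.inr ⟨lam, hlam, h⟩)

lemma succ_of_tail (h : BakerWins G t S (fun i => r (i + 1))) : BakerWins G (t + 1) S r := by
  refine succ_restrict (fun _ => 0) (fun _ _ _ _ _ => by simp) fun a b _ => ?_
  by_cases h0 : (0 : ℤ) ∈ Icc a b
  · simpa [h0] using h
  · simpa [h0] using bakerWins_empty t _

lemma of_seq_le {r' : ℕ → ℕ} (hr : ∀ i, r' i ≤ r i) (h : BakerWins G t S r) :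
    BakerWins G t S r' := by
  induction t generalizing S r r' with
  | zero => exact h
  | succ t ih =>
    rcases h with h | ⟨v, hv, hmin, h⟩ | ⟨lam, hlam, h⟩
    · exact Or.inl h
    · exact succ_delete hv hmin (ih (fun i => hr (i + 1)) h)
    · exact succ_restrict lam hlam fun a b hab =>
        ih (fun i => hr (i + 1)) (h a b (by have := hr 0; omega))

lemma subset {S' : Set V} (hS : S' ⊆ S) (h : BakerWins G t S r) : BakerWins G t S' r := by
  induction t generalizing S S' r with
  | zero => exact subset_empty_iff.1 (h ▸ hS)
  | succ t ih =>
    rcases h with h | ⟨v, hv, hmin, h⟩ | ⟨lam, hlam, h⟩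
    · exact Or.inl (subset_empty_iff.1 (h ▸ hS))
    · by_cases hv' : v ∈ S'
      · exact succ_delete hv' (fun u hu => hmin u (hS hu)) (ih (sdiff_subset_sdiff_left hS) h)
      · refine succ_of_tail (ih ?_ h)
        exact fun u hu => ⟨hS hu, fun huv => hv' (huv ▸ hu)⟩
    · refine succ_restrict lam (fun u hu w hw => hlam u (hS hu) w (hS hw)) fun a b hab => ?_
      refine ih ?_ (h a b hab)
      exact fun u hu => ⟨hS hu.1, hu.2⟩

lemma succ (h : BakerWins G t S r) : BakerWins G (t + 1) S r := by
  induction t generalizing S r with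
  | zero => exact Or.inl h
  | succ t ih =>
    rcases h with h | ⟨v, hv, hmin, h⟩ | ⟨lam, hlam, h⟩
    · exact Or.inl h
    · exact succ_delete hv hmin (ih h)
    · exact succ_restrict lam hlam fun a b hab => ih (h a b hab)

lemma mono {t' : ℕ} (htt' : t ≤ t') (h : BakerWins G t S r) : BakerWins G t' S r := by
  induction htt' with
  | refl => exact h
  | step _ ih => exact ih.succ

lemma image {W : Type*} [LinearOrder W] {H : SimpleGraph W} {f : W → V} (hf : StrictMono f)
    (hadj : ∀ a b, G.Adj (f a) (f b) → H.Adj a b) {T : Set W} (h : BakerWins H t T r) :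
    BakerWins G t (f '' T) r := by
  induction t generalizing T r with
  | zero => exact image_eq_empty.2 h
  | succ t ih =>
    rcases h with h | ⟨v, hv, hmin, h⟩ | ⟨lam, hlam, h⟩
    · exact Or.inl (image_eq_empty.2 h)
    · refine succ_delete (mem_image_of_mem f hv) ?_ ?_
      · rintro _ ⟨u, hu, rfl⟩
        exact hf.monotone (hmin u hu)
      · rw [← image_singleton, ← image_sdiff hf.injective]
        exact ih h
    · set lam' := Function.extend f lam 0
      have hlam' : ∀ u, lam' (f u) = lam u := hf.injective.extend_apply lam 0
      refine succ_restrict lam' ?_ fun a b hab => ?_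
      · rintro _ ⟨u, hu, rfl⟩ _ ⟨w, hw, rfl⟩ huw
        rw [hlam', hlam']
        exact hlam u hu w hw (hadj u w huw)
      · have hpre : {u | u ∈ T ∧ lam u ∈ Icc a b} = T ∩ f ⁻¹' (lam' ⁻¹' Icc a b) := by
          ext u
          simp only [mem_ofPred_eq, mem_inter_iff, mem_preimage, hlam']
        have := ih (h a b hab)
        rwa [hpre, image_inter_preimage] at this

end BakerWins

lemma bakerWins_succ_of_fibers [Finite V] {ι : Type*} [Countable ι] (f : V → ι)
    (hf : ∀ u ∈ S, ∀ w ∈ S, G.Adj u w → f u = f w)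
    (h : ∀ i, BakerWins G t {v | v ∈ S ∧ f v = i} (fun i => r (i + 1))) :
    BakerWins G (t + 1) S r := by
  obtain ⟨g, hg⟩ := Countable.exists_injective_nat ι
  -- fibres sit on multiples of `r 0 + 1`, so a window of `r 0` layers meets at most one
  refine BakerWins.succ_restrict (fun v => ((r 0 : ℤ) + 1) * g (f v))
    (fun u hu w hw huw => by simp [hf u hu w hw huw]) fun a b hab => ?_
  rcases eq_empty_or_nonempty {v | v ∈ S ∧ ((r 0 : ℤ) + 1) * g (f v) ∈ Icc a b} with he | ⟨v, hv⟩
  · exact he ▸ bakerWins_empty t _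
  refine (h (f v)).subset fun w hw => ?_
  refine ⟨hw.1, hg ?_⟩
  obtain ⟨hv₁, hv₂⟩ := hv.2
  obtain ⟨hw₁, hw₂⟩ := hw.2
  by_contra hne
  rcases Nat.lt_or_gt_of_ne hne with hlt | hlt
  · nlinarith [show (g (f w) : ℤ) + 1 ≤ g (f v) by exact_mod_cast hlt]
  · nlinarith [show (g (f v) : ℤ) + 1 ≤ g (f w) by exact_mod_cast hlt]

end BakerWins

section Components

variable {V : Type*} (G : SimpleGraph V)

def compOf (A : Set V) (x : V) : Set V := {y | (restrictSet G A).Reachable x y}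

def attach (A B : Set V) (x : V) : Set V := {u | u ∈ B ∧ ∃ c ∈ compOf G A x, G.Adj u c}

def IsDetached (A B : Set V) (x : V) : Prop := x ∈ A ∧ attach G A B x = ∅

open Classical in
noncomputable def extendLayering (A B : Set V) (lam : V → ℤ) (v : V) : ℤ :=
  if v ∈ A then sInf (lam '' attach G A B v) else lam v

variable {G} {A A' B S S' : Set V} {u x y : V}

lemma isComponentOf_compOf (hx : x ∉ B) : IsComponentOf G B (compOf G (univ \ B) x) :=
  ⟨x, hx, by rw [← compl_eq_univ_sdiff]; rfl⟩

lemma mem_compOf_self : x ∈ compOf G A x := SimpleGraph.Reachable.refl x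

lemma compOf_eq_of_mem (h : y ∈ compOf G A x) : compOf G A y = compOf G A x := by
  ext z
  exact ⟨fun hz => SimpleGraph.Reachable.trans h hz, fun hz => h.symm.trans hz⟩

lemma mem_compOf_of_adj (hx : x ∈ A) (hy : y ∈ A) (h : G.Adj x y) : y ∈ compOf G A x :=
  SimpleGraph.Adj.reachable (G := restrictSet G A) ⟨h, hx, hy⟩

lemma compOf_subset (hx : x ∈ A) : compOf G A x ⊆ A := by
  intro y hy
  obtain ⟨w⟩ := SimpleGraph.Reachable.symm hy
  cases w with
  | nil => exact hx
  | cons h _ => exact h.2.1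

lemma restrictSet_mono (hA' : A' ⊆ A) : restrictSet G A' ≤ restrictSet G A :=
  fun _ _ he => ⟨he.1, hA' he.2.1, hA' he.2.2⟩

lemma compOf_mono (hA' : A' ⊆ A) : compOf G A' x ⊆ compOf G A x :=
  fun _ hy => SimpleGraph.Reachable.mono (restrictSet_mono hA') hy

lemma compOf_eq_of_subset (hA' : A' ⊆ A) (h : compOf G A x ⊆ A') :
    compOf G A' x = compOf G A x := by
  refine (compOf_mono hA').antisymm fun y ⟨w⟩ => ?_
  suffices ∀ y z, (restrictSet G A).Walk y z → y ∈ compOf G A' x → z ∈ compOf G A' x from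
    this x y w mem_compOf_self
  intro y z w
  induction w with
  | nil => exact id
  | @cons y y' z he _ ih =>
    intro hy
    have hyA : y ∈ compOf G A x := compOf_mono hA' hy
    have hy'A : y' ∈ compOf G A x := SimpleGraph.Reachable.trans hyA he.reachable
    exact ih (SimpleGraph.Reachable.trans hy
      (SimpleGraph.Adj.reachable (G := restrictSet G A') ⟨he.1, h hyA, h hy'A⟩))

lemma attach_eq_of_mem (h : y ∈ compOf G A x) : attach G A B y = attach G A B x := by
  rw [attach, attach, compOf_eq_of_mem h]

lemma mem_attach_of_adj (hu : u ∈ B) (h : G.Adj u x) : u ∈ attach G A B x :=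
  ⟨hu, x, mem_compOf_self, h⟩

lemma compOf_sdiff_eq (hS' : S' ⊆ S) (hx : x ∈ S' \ B) (h : compOf G (S \ B) x ⊆ S') :
    compOf G (S' \ B) x = compOf G (S \ B) x :=
  compOf_eq_of_subset (sdiff_subset_sdiff_left hS')
    fun y hy => show y ∈ S' \ B from ⟨h hy, (compOf_subset (A := S \ B) ⟨hS' hx.1, hx.2⟩ hy).2⟩

lemma IsDetached.of_adj {w : V} (hd : IsDetached G (S \ B) B u) (hw : w ∈ S) (huw : G.Adj u w) :
    IsDetached G (S \ B) B w ∧ compOf G (S \ B) w = compOf G (S \ B) u := by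
  have hwA : w ∈ S \ B := ⟨hw, fun hwB => by
    simpa [hd.2] using mem_attach_of_adj (A := S \ B) hwB huw.symm⟩
  have hwu := compOf_eq_of_mem (mem_compOf_of_adj hd.1 hwA huw)
  exact ⟨⟨hwA, by rw [attach, hwu]; exact hd.2⟩, hwu⟩

variable {lam : V → ℤ}

lemma extendLayering_of_notMem (hx : x ∉ A) : extendLayering G A B lam x = lam x := if_neg hx

lemma extendLayering_mem [Finite V] (hx : x ∈ A) (hne : (attach G A B x).Nonempty) :
    extendLayering G A B lam x ∈ lam '' attach G A B x := by
  rw [extendLayering, if_pos hx]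
  exact (hne.image lam).csInf_mem (toFinite _)

lemma extendLayering_eq_of_mem_compOf (hx : x ∈ A) (hy : y ∈ compOf G A x) :
    extendLayering G A B lam y = extendLayering G A B lam x := by
  rw [extendLayering, extendLayering, if_pos (compOf_subset hx hy), if_pos hx,
    attach_eq_of_mem hy]

end Components

section CliqueSumState

variable {V : Type*} [LinearOrder V] {G : SimpleGraph V} {P : Set V → Prop} {S S' B B' : Set V}
  {b t : ℕ} {r rB : ℕ → ℕ}

structure IsCliqueSumState (G : SimpleGraph V) (P : Set V → Prop) (S B : Set V) : Prop where
  subset : B ⊆ S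
  comp : ∀ x ∈ S \ B, P (compOf G (S \ B) x)
  isClique : ∀ x ∈ S \ B, G.IsClique (attach G (S \ B) B x)
  lt : ∀ x ∈ S \ B, ∀ u ∈ attach G (S \ B) B x, ∀ c ∈ compOf G (S \ B) x, u < c

namespace IsCliqueSumState

lemma of_subset (hst : IsCliqueSumState G P S B) (hS' : S' ⊆ S) (hB' : S' ∩ B = B')
    (hcomp : ∀ x ∈ S' \ B, compOf G (S \ B) x ⊆ S') : IsCliqueSumState G P S' B' := by
  subst hB'
  have hx' : ∀ x ∈ S' \ B, x ∈ S \ B := fun x hx => ⟨hS' hx.1, hx.2⟩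
  have hcomp' : ∀ x ∈ S' \ B, compOf G (S' \ B) x = compOf G (S \ B) x :=
    fun x hx => compOf_sdiff_eq hS' hx (hcomp x hx)
  have hatt : ∀ x ∈ S' \ B, attach G (S' \ B) (S' ∩ B) x ⊆ attach G (S \ B) B x :=
    fun x hx u ⟨hu, c, hc, huc⟩ => ⟨hu.2, c, hcomp' x hx ▸ hc, huc⟩
  refine ⟨inter_subset_left, ?_, ?_, ?_⟩ <;> simp only [sdiff_self_inter]
  · exact fun x hx => hcomp' x hx ▸ hst.comp x (hx' x hx)
  · exact fun x hx => (hst.isClique x (hx' x hx)).subset (hatt x hx)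
  · exact fun x hx u hu c hc => hst.lt x (hx' x hx) u (hatt x hx hu) c (hcomp' x hx ▸ hc)

lemma abs_extendLayering_sub_le [Finite V] (hst : IsCliqueSumState G P S B)
    (hne : ∀ x ∈ S \ B, (attach G (S \ B) B x).Nonempty) {lam : V → ℤ}
    (hlam : ∀ u ∈ B, ∀ w ∈ B, G.Adj u w → |lam u - lam w| ≤ 1) :
    ∀ u ∈ S, ∀ w ∈ S, G.Adj u w →
      |extendLayering G (S \ B) B lam u - extendLayering G (S \ B) B lam w| ≤ 1 := by
  have hBA : ∀ u ∈ B, ∀ w ∈ S \ B, G.Adj u w →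
      |extendLayering G (S \ B) B lam u - extendLayering G (S \ B) B lam w| ≤ 1 := by
    intro u hu w hw huw
    obtain ⟨x, hx, hxw⟩ := extendLayering_mem (lam := lam) hw (hne w hw)
    rw [extendLayering_of_notMem fun h => h.2 hu, ← hxw]
    rcases eq_or_ne u x with rfl | hux
    · simp
    · exact hlam u hu x hx.1 (hst.isClique w hw (mem_attach_of_adj hu huw) hx hux)
  intro u hu w hw huw
  by_cases huB : u ∈ B <;> by_cases hwB : w ∈ B
  · rw [extendLayering_of_notMem fun h => h.2 huB, extendLayering_of_notMem fun h => h.2 hwB]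
    exact hlam u huB w hwB huw
  · exact hBA u huB w ⟨hw, hwB⟩ huw
  · rw [abs_sub_comm]
    exact hBA w hwB u ⟨hu, huB⟩ huw.symm
  · have huA : u ∈ S \ B := ⟨hu, huB⟩
    rw [extendLayering_eq_of_mem_compOf huA (mem_compOf_of_adj huA ⟨hw, hwB⟩ huw), sub_self,
      abs_zero]
    exact zero_le_one

lemma bakerWins_succ_of_delete (hst : IsCliqueSumState G P S B)
    (hne : ∀ x ∈ S \ B, (attach G (S \ B) B x).Nonempty)
    (hnext : ∀ S' B', IsCliqueSumState G P S' B' → BakerWins G b B' (fun i => rB (i + 1)) →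
      BakerWins G t S' (fun i => r (i + 1)))
    {v : V} (hv : v ∈ B) (hmin : ∀ u ∈ B, v ≤ u)
    (hB : BakerWins G b (B \ {v}) (fun i => rB (i + 1))) : BakerWins G (t + 1) S r := by
  have hvmin : ∀ u ∈ S, v ≤ u := by
    intro u hu
    by_cases huB : u ∈ B
    · exact hmin u huB
    · obtain ⟨w, hw⟩ := hne u ⟨hu, huB⟩
      exact (hmin w hw.1).trans (hst.lt u ⟨hu, huB⟩ w hw u mem_compOf_self).le
  refine BakerWins.succ_delete (hst.subset hv) hvmin (hnext _ _ ?_ hB)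
  refine hst.of_subset sdiff_subset ?_ fun x hx y hy => ?_
  · rw [inter_comm, ← inter_sdiff_assoc, inter_eq_left.2 hst.subset]
  · have hyB := compOf_subset (A := S \ B) ⟨hx.1.1, hx.2⟩ hy
    exact ⟨hyB.1, fun (hyv : y = v) => hyB.2 (hyv ▸ hv)⟩

lemma bakerWins_succ_of_restrict [Finite V] (hst : IsCliqueSumState G P S B)
    (hne : ∀ x ∈ S \ B, (attach G (S \ B) B x).Nonempty)
    (hnext : ∀ S' B', IsCliqueSumState G P S' B' → BakerWins G b B' (fun i => rB (i + 1)) →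
      BakerWins G t S' (fun i => r (i + 1)))
    (hr : r 0 ≤ rB 0) {lam : V → ℤ} (hlam : ∀ u ∈ B, ∀ w ∈ B, G.Adj u w → |lam u - lam w| ≤ 1)
    (hB : ∀ a c : ℤ, c + 1 ≤ a + (rB 0 : ℤ) →
      BakerWins G b {u | u ∈ B ∧ lam u ∈ Icc a c} (fun i => rB (i + 1))) :
    BakerWins G (t + 1) S r := by
  set lam' := extendLayering G (S \ B) B lam
  have hlamB : ∀ u ∈ B, lam' u = lam u := fun u hu => extendLayering_of_notMem fun h => h.2 hu
  have hconst : ∀ x ∈ S \ B, ∀ y ∈ compOf G (S \ B) x, lam' y = lam' x :=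
    fun x hx y hy => extendLayering_eq_of_mem_compOf hx hy
  refine BakerWins.succ_restrict lam' (hst.abs_extendLayering_sub_le hne hlam) fun a c hac => ?_
  refine hnext _ _ (hst.of_subset (sep_subset _ _) ?_ fun x hx y hy => ?_) (hB a c (by omega))
  · ext u
    constructor
    · rintro ⟨⟨-, hu⟩, huB⟩
      exact ⟨huB, hlamB u huB ▸ hu⟩
    · rintro ⟨huB, hu⟩
      exact ⟨⟨hst.subset huB, (hlamB u huB).symm ▸ hu⟩, huB⟩
  · have hxA : x ∈ S \ B := ⟨hx.1.1, hx.2⟩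
    refine ⟨(compOf_subset hxA hy).1, ?_⟩
    rw [hconst x hxA y hy]
    exact hx.1.2

lemma bakerWins_succ_of_base [Finite V] (hst : IsCliqueSumState G P S B)
    (hne : ∀ x ∈ S \ B, (attach G (S \ B) B x).Nonempty)
    (hnext : ∀ S' B', IsCliqueSumState G P S' B' → BakerWins G b B' (fun i => rB (i + 1)) →
      BakerWins G t S' (fun i => r (i + 1)))
    (hr : r 0 ≤ rB 0) (hB : BakerWins G (b + 1) B rB) : BakerWins G (t + 1) S r := by
  rcases hB with hB | ⟨v, hv, hmin, hB⟩ | ⟨lam, hlam, hB⟩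
  · have hS : S = ∅ := eq_empty_of_forall_notMem fun x hx => by
      obtain ⟨u, hu, -⟩ := hne x ⟨hx, by simp [hB]⟩
      simp [hB] at hu
    exact hS ▸ bakerWins_empty _ _
  · exact hst.bakerWins_succ_of_delete hne hnext hv hmin hB
  · exact hst.bakerWins_succ_of_restrict hne hnext hr hlam hB

lemma sep_not_isDetached (hst : IsCliqueSumState G P S B) :
    IsCliqueSumState G P {v | v ∈ S ∧ ¬ IsDetached G (S \ B) B v} B ∧
      ∀ x ∈ {v | v ∈ S ∧ ¬ IsDetached G (S \ B) B v} \ B,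
        (attach G ({v | v ∈ S ∧ ¬ IsDetached G (S \ B) B v} \ B) B x).Nonempty := by
  set S₀ := {v | v ∈ S ∧ ¬ IsDetached G (S \ B) B v}
  have hS₀ : ∀ x ∈ S₀ \ B, compOf G (S \ B) x ⊆ S₀ := by
    intro x hx y hy
    have hyA := compOf_subset (A := S \ B) ⟨hx.1.1, hx.2⟩ hy
    exact ⟨hyA.1, fun hdy => hx.1.2 ⟨⟨hx.1.1, hx.2⟩, attach_eq_of_mem hy ▸ hdy.2⟩⟩
  refine ⟨hst.of_subset (sep_subset _ _)
    (inter_eq_right.2 fun u hu => ⟨hst.subset hu, fun hdu => hdu.1.2 hu⟩) hS₀, fun x hx => ?_⟩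
  have hatt : attach G (S₀ \ B) B x = attach G (S \ B) B x := by
    unfold attach
    rw [compOf_sdiff_eq (sep_subset _ _) hx (hS₀ x hx)]
  rw [hatt]
  exact nonempty_iff_ne_empty.2 fun he => hx.1.2 ⟨⟨hx.1.1, hx.2⟩, he⟩

lemma bakerWins_succ_of_detach [Finite V] (hst : IsCliqueSumState G P S B)
    (hP : ∀ C, P C → BakerWins G t C (fun i => r (i + 1)))
    (hrest : ∀ S₀, IsCliqueSumState G P S₀ B → (∀ x ∈ S₀ \ B, (attach G (S₀ \ B) B x).Nonempty) →
      BakerWins G t S₀ (fun i => r (i + 1))) :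
    BakerWins G (t + 1) S r := by
  classical
  set f : V → Option (Set V) := fun v =>
    if IsDetached G (S \ B) B v then some (compOf G (S \ B) v) else none
  refine bakerWins_succ_of_fibers f (fun u hu w hw huw => ?_) fun C => ?_
  · by_cases hdu : IsDetached G (S \ B) B u
    · obtain ⟨hdw, hwu⟩ := hdu.of_adj hw huw
      simp only [f, if_pos hdu, if_pos hdw, hwu]
    · have hdw : ¬ IsDetached G (S \ B) B w := fun hdw => hdu (hdw.of_adj hu huw.symm).1
      simp only [f, if_neg hdu, if_neg hdw]
  cases C with
  | none =>
    obtain ⟨hst₀, hne₀⟩ := hst.sep_not_isDetached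
    refine (hrest _ hst₀ hne₀).subset fun v hv => ?_
    exact ⟨hv.1, fun hdv => by simp [f, hdv] at hv⟩
  | some C =>
    rcases eq_empty_or_nonempty {v | v ∈ S ∧ f v = some C} with he | ⟨v, -, hv⟩
    · rw [he]
      exact bakerWins_empty _ _
    simp only [f, Option.ite_none_right_eq_some, Option.some_inj] at hv
    refine (hP _ (hst.comp v hv.1.1)).subset fun w ⟨_, hw⟩ => ?_
    simp only [f, Option.ite_none_right_eq_some, Option.some_inj] at hw
    rw [hv.2, ← hw.2]
    exact mem_compOf_self

theorem bakerWins [Finite V] {t₂ : ℕ} {s : ℕ → ℕ} (b : ℕ)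
    (hst : IsCliqueSumState G (fun C => BakerWins G t₂ C s) S B) (hB : BakerWins G b B rB)
    (hrB : ∀ i, r (2 * i + 1) ≤ rB i) (hs : ∀ m ≤ b, ∀ i, r (2 * m + 1 + i) ≤ s i) :
    BakerWins G (2 * b + 1 + t₂) S r := by
  have hcomp_wins {r : ℕ → ℕ} (b : ℕ) (hs : ∀ m ≤ b, ∀ i, r (2 * m + 1 + i) ≤ s i) (C : Set V)
      (hC : BakerWins G t₂ C s) : BakerWins G (2 * b + t₂) C (fun i => r (i + 1)) :=
    (hC.of_seq_le fun i => by simpa [add_comm] using hs 0 b.zero_le i).mono (by omega)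
  induction b generalizing r rB S B with
  | zero =>
    rw [show 2 * 0 + 1 + t₂ = 2 * 0 + t₂ + 1 by ring]
    refine hst.bakerWins_succ_of_detach (hcomp_wins 0 hs) fun S₀ _ hne₀ => ?_
    have hB : B = ∅ := hB
    have hS₀ : S₀ = ∅ := eq_empty_of_forall_notMem fun x hx => by
      obtain ⟨u, hu, -⟩ := hne₀ x ⟨hx, by simp [hB]⟩
      simp [hB] at hu
    exact hS₀ ▸ bakerWins_empty _ _
  | succ b ih =>
    rw [show 2 * (b + 1) + 1 + t₂ = 2 * (b + 1) + t₂ + 1 by ring]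
    refine hst.bakerWins_succ_of_detach (hcomp_wins _ hs) fun S₀ hst₀ hne₀ => ?_
    rw [show 2 * (b + 1) + t₂ = 2 * b + 1 + t₂ + 1 by ring]
    refine hst₀.bakerWins_succ_of_base hne₀ (fun S' B' hst' hB' => ?_) (hrB 0) hB
    refine ih (r := fun i => r (i + 1 + 1)) hst' hB' (fun i => ?_) fun m hm i => ?_
    · convert hrB (i + 1) using 2
      ring
    · convert hs (m + 1) (by omega) i using 2
      ring

end IsCliqueSumState

end CliqueSumState

lemma OrderedGraph.bakerWins_of_induce (O : OrderedGraph) {T : Set O.V} {t : ℕ} {r : ℕ → ℕ}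
    (h : BakerWins (O.induce T).graph t univ r) : BakerWins O.graph t T r := by
  convert h.image (G := O.graph) (f := Subtype.val) (Subtype.strictMono_coe _) fun _ _ h => h
  exact (Subtype.coe_image_univ T).symm

/-- If `C₁` and `C₂` are Baker classes, then `C₁ ⊕ C₂` is a Baker class. -/
theorem stmt_4 (C₁ C₂ : Set OrderedGraph)
    (h₁ : IsBakerClass C₁) (h₂ : IsBakerClass C₂) :
    IsBakerClass (CliqueSum C₁ C₂) := by
  intro r hr
  obtain ⟨t₁, ht₁⟩ := h₁ (fun i => r (2 * i + 1)) fun i => hr _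
  set s : ℕ → ℕ := fun i => (Finset.range (t₁ + 1)).sup fun m => r (2 * m + 1 + i)
  have hs : ∀ m ≤ t₁, ∀ i, r (2 * m + 1 + i) ≤ s i := fun m hm i =>
    Finset.le_sup (f := fun m => r (2 * m + 1 + i)) (Finset.mem_range.2 (by omega))
  obtain ⟨t₂, ht₂⟩ := h₂ s fun i => (hr _).trans_le (hs 0 t₁.zero_le i)
  refine ⟨2 * t₁ + 1 + t₂, fun O ⟨B, hB, hcomps⟩ => ?_⟩
  refine IsCliqueSumState.bakerWins t₁ ⟨subset_univ B, fun x hx => ?_, fun x hx => ?_,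
    fun x hx => ?_⟩ (O.bakerWins_of_induce (ht₁ _ hB)) (fun _ => le_rfl) hs
  all_goals obtain ⟨hC₂, hclique, hlt⟩ := hcomps _ (isComponentOf_compOf hx.2)
  · exact O.bakerWins_of_induce (ht₂ _ hC₂)
  · exact fun u hu w hw huw => hclique u hu.1 hu.2 w hw.1 hw.2 huw
  · exact fun u hu => hlt u hu.1 hu.2
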